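/- The function E(x) = [ -2x(1-x)·log₂(2x(1-x)) - x²·log₂(x²) - (1-x)²·log₂((1-x)²) ] / (2x(1-x)) on (0,1) is minimized uniquely at x = 1/2, where E(1/2) = 3. -/

import Mathlib

/-!
Writing `g u = -log (1 - u) / u`, the splitting entropy is `E x = -1 + (g x + g (1 - x)) / log 2`.
Since `g u = ∑ uⁿ / (n + 1)` is a power series with positive coefficients, comparing it termwise
with the convex functions `uⁿ` gives `g x + g (1 - x) > 2 g (1/2) = 4 log 2` unless `x = 1/2`;
the quadratic term is already strictly convex.
-/

open Real Set

-- At `u = 0` this is `0`, not the limit `1` of the power series below.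
noncomputable def negLogOneSubDiv (u : ℝ) : ℝ := -log (1 - u) / u

noncomputable def splittingEntropy (x : ℝ) : ℝ :=
  (-(2 * x * (1 - x)) * logb 2 (2 * x * (1 - x))
    - x ^ 2 * logb 2 (x ^ 2)
    - (1 - x) ^ 2 * logb 2 ((1 - x) ^ 2)) / (2 * x * (1 - x))

theorem hasSum_negLogOneSubDiv {u : ℝ} (hu : |u| < 1) (hu0 : u ≠ 0) :
    HasSum (fun n : ℕ => u ^ n / (n + 1)) (negLogOneSubDiv u) := by
  have h := (hasSum_pow_div_log_of_abs_lt_one hu).div_const u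
  simp only [pow_succ, mul_div_right_comm _ u, div_mul_cancel₀ _ hu0] at h
  exact h

theorem negLogOneSubDiv_half : negLogOneSubDiv (1 / 2) = 2 * log 2 := by
  rw [negLogOneSubDiv, show (1 : ℝ) - 1 / 2 = 2⁻¹ by norm_num, log_inv]
  ring

theorem two_mul_pow_midpoint_le {a b : ℝ} (ha : 0 ≤ a) (hb : 0 ≤ b) (n : ℕ) :
    2 * ((a + b) / 2) ^ n ≤ a ^ n + b ^ n := by
  have h := (convexOn_pow n).2 (mem_Ici.2 ha) (mem_Ici.2 hb) (by norm_num : (0 : ℝ) ≤ 1 / 2)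
    (by norm_num : (0 : ℝ) ≤ 1 / 2) (by norm_num)
  simp only [smul_eq_mul] at h
  rw [show 1 / 2 * a + 1 / 2 * b = (a + b) / 2 by ring] at h
  linarith

theorem two_mul_negLogOneSubDiv_midpoint_lt {a b : ℝ} (ha : a ∈ Ioo 0 1) (hb : b ∈ Ioo 0 1)
    (hab : a ≠ b) :
    2 * negLogOneSubDiv ((a + b) / 2) < negLogOneSubDiv a + negLogOneSubDiv b := by
  have hmem {u : ℝ} (hu : u ∈ Ioo (0 : ℝ) 1) : |u| < 1 := abs_lt.2 ⟨by linarith [hu.1], hu.2⟩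
  have hm : (a + b) / 2 ∈ Ioo (0 : ℝ) 1 := ⟨by linarith [ha.1, hb.1], by linarith [ha.2, hb.2]⟩
  have hsumMid := (hasSum_negLogOneSubDiv (hmem hm) hm.1.ne').mul_left 2
  have hsumAB := (hasSum_negLogOneSubDiv (hmem ha) ha.1.ne').add
    (hasSum_negLogOneSubDiv (hmem hb) hb.1.ne')
  refine hasSum_lt (i := 2) (fun n => ?_) ?_ hsumMid hsumAB
  · rw [← mul_div_assoc, ← add_div]
    gcongr
    exact two_mul_pow_midpoint_le ha.1.le hb.1.le n
  · rw [← mul_div_assoc, ← add_div]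
    gcongr
    nlinarith [sq_pos_of_ne_zero (sub_ne_zero.2 hab)]

theorem splittingEntropy_eq {x : ℝ} (hx0 : 0 < x) (hx1 : x < 1) :
    splittingEntropy x = -1 + (negLogOneSubDiv x + negLogOneSubDiv (1 - x)) / log 2 := by
  have h1x : 1 - x ≠ 0 := by linarith
  have hlog2 : log 2 ≠ 0 := (log_pos one_lt_two).ne'
  have hlogProd : log (2 * x * (1 - x)) = log 2 + log x + log (1 - x) := by
    rw [log_mul (by positivity) h1x, log_mul two_ne_zero hx0.ne']
  simp only [splittingEntropy, negLogOneSubDiv, logb, hlogProd, log_pow, sub_sub_cancel]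
  field_simp
  push_cast
  ring

theorem splittingEntropy_half : splittingEntropy (1 / 2) = 3 := by
  rw [splittingEntropy_eq (by norm_num) (by norm_num), show (1 : ℝ) - 1 / 2 = 1 / 2 by norm_num,
    negLogOneSubDiv_half]
  field_simp [(log_pos one_lt_two).ne']
  ring

/-- The entropy function
`E(x) = [-2x(1-x)log₂(2x(1-x)) - x²log₂(x²) - (1-x)²log₂((1-x)²)] / (2x(1-x))`
on `(0,1)` is minimized uniquely at `x = 1/2`, where `E(1/2) = 3`. -/
theorem stmt_10 :
    let E : ℝ → ℝ := fun x =>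
      (-(2 * x * (1 - x)) * Real.logb 2 (2 * x * (1 - x))
        - x ^ 2 * Real.logb 2 (x ^ 2)
        - (1 - x) ^ 2 * Real.logb 2 ((1 - x) ^ 2)) / (2 * x * (1 - x))
    E (1/2) = 3 ∧ ∀ x ∈ Set.Ioo (0:ℝ) 1, x ≠ 1/2 → E (1/2) < E x := by
  show splittingEntropy (1 / 2) = 3 ∧
    ∀ x ∈ Ioo (0 : ℝ) 1, x ≠ 1 / 2 → splittingEntropy (1 / 2) < splittingEntropy x
  refine ⟨splittingEntropy_half, fun x hx hx_ne => ?_⟩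
  have hx' : 1 - x ∈ Ioo (0 : ℝ) 1 := ⟨by linarith [hx.2], by linarith [hx.1]⟩
  have hlt := two_mul_negLogOneSubDiv_midpoint_lt hx hx' (fun h => hx_ne (by linarith))
  rw [show (x + (1 - x)) / 2 = 1 / 2 by ring, negLogOneSubDiv_half] at hlt
  rw [splittingEntropy_half, splittingEntropy_eq hx.1 hx.2, lt_neg_add_iff_add_lt,
    lt_div_iff₀ (log_pos one_lt_two)]
  linarith
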